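/- Let f be a positive semidefinite kernel. Then (1/T^2) * sum_{s,t} (f(x_s,x_t) - y_s·y_t)^2 is bounded above by the correlation-based objective E(Y, W, q) := -(2/T) * sum_t sum_{i=1}^N [ q_i y_t[i] f(w_i, x_t) - (1/2) q_i^2 f(w_i, w_i) ] + sum_{i,j=1}^N ( (1/T) sum_t y_t[i] y_t[j] )^2 + (1/T^2) * sum_{s,t} f(x_s,x_t)^2, for any choice of vectors w_1,...,w_N in R^M and scalars q_1,...,q_N. -/

import Mathlib

/-!
With `K = (f(x_s, x_t))` and `G = (y_s · y_t) = Y Yᵀ`, the left side is `‖K - G‖² / T²`; expand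
the square and use `‖Y Yᵀ‖² = ‖Yᵀ Y‖²`. The cross term `⟪K, G⟫` splits over the output
coordinates `i` into the kernel quadratic forms `‖g_i‖²` of `g_i = ∑_t y_t[i] f(x_t, ·)`.
Positive semidefiniteness on the points `x_1, …, x_T, w_i` is the RKHS inequality
`‖g‖² ≥ 2 ⟪g, h⟫ - ‖h‖²` for `h = T q_i f(w_i, ·)`; averaging it with `‖g‖² ≥ 0` gives exactly
the correlation term of the objective.
-/

open Finset

def IsPosSemidefKernel {α : Type*} (f : α → α → ℝ) : Prop :=
  ∀ (n : ℕ) (z : Fin n → α) (c : Fin n → ℝ), 0 ≤ ∑ s, ∑ t, c s * c t * f (z s) (z t)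

theorem sum_sum_sq_sum_mul_eq {ι κ : Type*} [Fintype ι] [Fintype κ] (y : ι → κ → ℝ) :
    ∑ s, ∑ t, (∑ i, y s i * y t i) ^ 2 = ∑ i, ∑ j, (∑ t, y t i * y t j) ^ 2 := by
  simp only [sq, sum_mul_sum, mul_mul_mul_comm]
  simp_rw [sum_comm (s := (univ : Finset ι)) (t := (univ : Finset κ))]

namespace IsPosSemidefKernel

variable {α : Type*} {f : α → α → ℝ} {T : ℕ}

theorem two_mul_sum_sub_sq_mul_le (hf : IsPosSemidefKernel f) (hsymm : ∀ u v, f u v = f v u)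
    (x : Fin T → α) (a : Fin T → ℝ) (u : α) (b : ℝ) :
    2 * b * ∑ t, a t * f u (x t) - b ^ 2 * f u u ≤ ∑ s, ∑ t, a s * a t * f (x s) (x t) := by
  have h := hf (T + 1) (Fin.snoc x u) (Fin.snoc a (-b))
  simp only [Fin.sum_univ_castSucc, Fin.snoc_castSucc, Fin.snoc_last, sum_add_distrib] at h
  have hleft : ∑ t, -b * a t * f u (x t) = -b * ∑ t, a t * f u (x t) := by
    rw [mul_sum]; exact sum_congr rfl fun t _ => by ring
  have hright : ∑ t, a t * -b * f (x t) u = -b * ∑ t, a t * f u (x t) := by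
    rw [mul_sum]; exact sum_congr rfl fun t _ => by rw [hsymm]; ring
  rw [hleft, hright] at h
  linarith

theorem mul_sum_sub_half_sq_mul_le (hf : IsPosSemidefKernel f) (hsymm : ∀ u v, f u v = f v u)
    (x : Fin T → α) (a : Fin T → ℝ) (u : α) (b : ℝ) :
    b * ∑ t, a t * f u (x t) - b ^ 2 / 2 * f u u ≤ ∑ s, ∑ t, a s * a t * f (x s) (x t) := by
  have hkey := hf.two_mul_sum_sub_sq_mul_le hsymm x a u b
  have hnonneg := hf T x a
  linarith

theorem natCast_mul_sum_le {ι : Type*} [Fintype ι] (hf : IsPosSemidefKernel f)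
    (hsymm : ∀ u v, f u v = f v u) (x : Fin T → α) (y : Fin T → ι → ℝ) (w : ι → α)
    (q : ι → ℝ) :
    (T : ℝ) * ∑ t, ∑ i, (q i * y t i * f (w i) (x t) - 1 / 2 * q i ^ 2 * f (w i) (w i)) ≤
      ∑ s, ∑ t, f (x s) (x t) * ∑ i, y s i * y t i := by
  have hlhs : ∀ i, (T : ℝ) * ∑ t, (q i * y t i * f (w i) (x t) - 1 / 2 * q i ^ 2 * f (w i) (w i))
      = T * q i * ∑ t, y t i * f (w i) (x t) - (T * q i) ^ 2 / 2 * f (w i) (w i) := by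
    intro i
    simp only [sum_sub_distrib, sum_const, card_univ, Fintype.card_fin, nsmul_eq_mul, mul_assoc,
      ← mul_sum]
    ring
  have hrhs : ∑ s, ∑ t, f (x s) (x t) * ∑ i, y s i * y t i
      = ∑ i, ∑ s, ∑ t, y s i * y t i * f (x s) (x t) := by
    simp_rw [mul_sum, mul_comm (f _ _),
      sum_comm (s := (univ : Finset (Fin T))) (t := (univ : Finset ι))]
  rw [sum_comm, mul_sum, hrhs]
  simp only [hlhs]
  exact sum_le_sum fun i _ => hf.mul_sum_sub_half_sq_mul_le hsymm x (fun t => y t i) (w i) _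

theorem sum_sum_sub_sq_le {ι : Type*} [Fintype ι] (hf : IsPosSemidefKernel f)
    (hsymm : ∀ u v, f u v = f v u) (x : Fin T → α) (y : Fin T → ι → ℝ) (w : ι → α)
    (q : ι → ℝ) :
    ∑ s, ∑ t, (f (x s) (x t) - ∑ i, y s i * y t i) ^ 2 ≤
      -(2 * (T : ℝ)) * ∑ t, ∑ i, (q i * y t i * f (w i) (x t) - 1 / 2 * q i ^ 2 * f (w i) (w i)) +
        ∑ i, ∑ j, (∑ t, y t i * y t j) ^ 2 + ∑ s, ∑ t, f (x s) (x t) ^ 2 := by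
  have hexpand : ∑ s, ∑ t, (f (x s) (x t) - ∑ i, y s i * y t i) ^ 2 =
      ∑ s, ∑ t, f (x s) (x t) ^ 2 - 2 * ∑ s, ∑ t, f (x s) (x t) * ∑ i, y s i * y t i +
        ∑ s, ∑ t, (∑ i, y s i * y t i) ^ 2 := by
    simp only [sub_sq, sum_add_distrib, sum_sub_distrib, mul_sum, mul_assoc]
  rw [hexpand, sum_sum_sq_sum_mul_eq]
  linarith [hf.natCast_mul_sum_le hsymm x y w q]

end IsPosSemidefKernel

theorem correlation_based_upper_bound_general (M N T : ℕ)
    (f : (Fin M → ℝ) → (Fin M → ℝ) → ℝ)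
    (hsymm : ∀ u v, f u v = f v u)
    (hpsd : ∀ (n : ℕ) (z : Fin n → (Fin M → ℝ)) (c : Fin n → ℝ),
      0 ≤ ∑ s, ∑ t, c s * c t * f (z s) (z t))
    (x : Fin T → (Fin M → ℝ)) (y : Fin T → (Fin N → ℝ))
    (w : Fin N → (Fin M → ℝ)) (q : Fin N → ℝ) :
    (1 / (T : ℝ) ^ 2) * ∑ s, ∑ t, (f (x s) (x t) - ∑ i, y s i * y t i) ^ 2 ≤
      -(2 / (T : ℝ)) * (∑ t, ∑ i,
          (q i * y t i * f (w i) (x t) - (1 / 2) * (q i) ^ 2 * f (w i) (w i))) +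
        (∑ i, ∑ j, ((1 / (T : ℝ)) * ∑ t, y t i * y t j) ^ 2) +
        (1 / (T : ℝ) ^ 2) * ∑ s, ∑ t, (f (x s) (x t)) ^ 2 := by
  have hbound := IsPosSemidefKernel.sum_sum_sub_sq_le hpsd hsymm x y w q
  have hscaled_gram : ∑ i, ∑ j, ((1 / (T : ℝ)) * ∑ t, y t i * y t j) ^ 2
      = 1 / (T : ℝ) ^ 2 * ∑ i, ∑ j, (∑ t, y t i * y t j) ^ 2 := by
    simp only [mul_pow, one_div_pow, ← mul_sum]
  have hinv : 1 / (T : ℝ) ^ 2 * T = 1 / T := by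
    rw [sq, one_div_mul_eq_div, div_self_mul_self', one_div]
  set D := ∑ t, ∑ i, (q i * y t i * f (w i) (x t) - 1 / 2 * q i ^ 2 * f (w i) (w i))
  rw [hscaled_gram]
  refine (mul_le_mul_of_nonneg_left hbound (by positivity)).trans_eq ?_
  linear_combination -2 * D * hinv

theorem correlation_based_upper_bound (M N T : ℕ) (hT : 0 < T)
    (f : (Fin M → ℝ) → (Fin M → ℝ) → ℝ)
    (hsymm : ∀ u v, f u v = f v u)
    (hpsd : ∀ (n : ℕ) (z : Fin n → (Fin M → ℝ)) (c : Fin n → ℝ),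
      0 ≤ ∑ s, ∑ t, c s * c t * f (z s) (z t))
    (x : Fin T → (Fin M → ℝ)) (y : Fin T → (Fin N → ℝ))
    (w : Fin N → (Fin M → ℝ)) (q : Fin N → ℝ) :
    (1 / (T : ℝ) ^ 2) * ∑ s, ∑ t, (f (x s) (x t) - ∑ i, y s i * y t i) ^ 2 ≤
      -(2 / (T : ℝ)) * (∑ t, ∑ i,
          (q i * y t i * f (w i) (x t) - (1 / 2) * (q i) ^ 2 * f (w i) (w i))) +
        (∑ i, ∑ j, ((1 / (T : ℝ)) * ∑ t, y t i * y t j) ^ 2) +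
        (1 / (T : ℝ) ^ 2) * ∑ s, ∑ t, (f (x s) (x t)) ^ 2 :=
  correlation_based_upper_bound_general M N T f hsymm hpsd x y w q
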